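/- arXiv:0801.2421 — 2 statements merged into one kernel-verified Lean document; each statement's English description precedes it below -/
import Mathlib

section
/- If a binary relation ⤳ satisfies the diamond property, then any two reduction sequences from a given element to a normal form (an element with no ⤳-successor) have the same length. -/
/-- `f` is a reduction sequence of length `n` from `x` to `y` for the relation `r`. -/
def IsRedSeq {S : Type*} (r : S → S → Prop) (f : ℕ → S) (n : ℕ) (x y : S) : Prop :=
  f 0 = x ∧ f n = y ∧ ∀ i < n, r (f i) (f (i + 1))

lemma isRedSeq_shift {S : Type*} {r : S → S → Prop} {f : ℕ → S} {k : ℕ} {x y : S}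
    (h : IsRedSeq r f (k + 1) x y) : IsRedSeq r (fun i => f (i + 1)) k (f 1) y := by
  obtain ⟨h0, hk, hstep⟩ := h
  exact ⟨rfl, hk, fun i hi => hstep (i + 1) (by omega)⟩

lemma diamond_aux {S : Type*} {r : S → S → Prop}
    (hd : ∀ T U₀ U₁, r T U₀ → r T U₁ → U₀ ≠ U₁ → ∃ V, r U₀ V ∧ r U₁ V) :
    ∀ (k : ℕ) (u v y : S) (f : ℕ → S), IsRedSeq r f (k + 1) u y → (∀ z, ¬ r y z) → r u v →
      ∃ g, IsRedSeq r g k v y := by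
  intro k
  induction k with
  | zero =>
    intro u v y f hf hy huv
    obtain ⟨h0, h1, hstep⟩ := hf
    by_cases hv : v = f 1
    · exact ⟨fun _ => y, by simp [IsRedSeq, hv, h1]⟩
    · exfalso
      obtain ⟨w, hw1, _⟩ := hd u (f 1) v (h0 ▸ hstep 0 (by omega)) huv (fun h => hv h.symm)
      exact hy w (h1 ▸ hw1)
  | succ k ih =>
    intro u v y f hf hy huv
    obtain ⟨h0, h1, hstep⟩ := hf
    by_cases hv : v = f 1
    · exact ⟨fun i => f (i + 1), hv ▸ isRedSeq_shift ⟨h0, h1, hstep⟩⟩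
    · obtain ⟨w, hw1, hw2⟩ := hd u (f 1) v (h0 ▸ hstep 0 (by omega)) huv (fun h => hv h.symm)
      obtain ⟨g, hg0, hgk, hgstep⟩ :=
        ih (f 1) w y (fun i => f (i + 1)) (isRedSeq_shift ⟨h0, h1, hstep⟩) hy hw1
      refine ⟨fun i => if i = 0 then v else g (i - 1), rfl, by simp [hgk], ?_⟩
      intro i hi
      match i with
      | 0 => simpa [hg0] using hw2
      | (j + 1) => simpa using hgstep j (by omega)

/-- If a relation satisfies the diamond property, any two reduction sequences from a
given element to a normal form have the same length. -/
theorem diamond_redSeq_length_eq {S : Type*} (r : S → S → Prop)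
    (hd : ∀ T U₀ U₁, r T U₀ → r T U₁ → U₀ ≠ U₁ → ∃ V, r U₀ V ∧ r U₁ V)
    (x y₀ y₁ : S) (f g : ℕ → S) (m n : ℕ)
    (hf : IsRedSeq r f m x y₀) (hg : IsRedSeq r g n x y₁)
    (hy₀ : ∀ z, ¬ r y₀ z) (hy₁ : ∀ z, ¬ r y₁ z) :
    m = n := by
  induction m generalizing x f g n y₁ with
  | zero =>
    obtain ⟨hf0, hfm, _⟩ := hf
    match n with
    | 0 => rfl
    | n + 1 =>
      obtain ⟨hg0, _, hgstep⟩ := hg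
      exact absurd (hfm ▸ hf0.symm ▸ hg0 ▸ hgstep 0 (by omega)) (hy₀ _)
  | succ m ih =>
    match n with
    | 0 =>
      obtain ⟨hg0, hgn, _⟩ := hg
      obtain ⟨hf0, _, hfstep⟩ := hf
      exact absurd (hgn ▸ hg0.symm ▸ hf0 ▸ hfstep 0 (by omega)) (hy₁ _)
    | n + 1 =>
      obtain ⟨g', hg'⟩ := diamond_aux hd n x (f 1) y₁ g hg hy₁
        (hf.1 ▸ hf.2.2 0 (by omega))
      exact congrArg Nat.succ (ih (f 1) y₁ (fun i => f (i + 1)) g' n (isRedSeq_shift hf) hg' hy₁)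
end

section
/- If the diamond property holds for a relation ⤳ and x reduces to the normal form ∅ in n steps, then every maximal reduction sequence from x has length n and ends at ∅; consequently x has no other normal form. -/
lemma shift_seq {S : Type*} {r : S → S → Prop} {f : ℕ → S} {n : ℕ} {x y : S}
    (hf : IsRedSeq r f (n + 1) x y) :
    IsRedSeq r (fun i => f (i + 1)) n (f 1) y :=
  ⟨rfl, hf.2.1, fun i hi => hf.2.2 (i + 1) (by omega)⟩

/-- Key lemma: if `x ⤳ a`, `x ⤳ b` and `a` reaches `e` in `n` steps (`e` normal),
then so does `b`. -/
lemma key_lemma {S : Type*} {r : S → S → Prop}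
    (hd : ∀ T U₀ U₁, r T U₀ → r T U₁ → U₀ ≠ U₁ → ∃ V, r U₀ V ∧ r U₁ V)
    (e : S) (he : ∀ z, ¬ r e z) :
    ∀ (n : ℕ) (x a b : S) (f : ℕ → S), r x a → r x b → IsRedSeq r f n a e →
      ∃ g, IsRedSeq r g n b e := by
  intro n
  induction n with
  | zero =>
    intro x a b f hxa hxb hf
    have hae : a = e := by rw [← hf.1, hf.2.1]
    by_cases hba : b = a
    · exact ⟨fun _ => b, rfl, by simp [hba, hae], fun i hi => by omega⟩
    · obtain ⟨V, hV1, hV2⟩ := hd x a b hxa hxb (fun h => hba h.symm)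
      exact absurd hV1 (hae ▸ he V)
  | succ n ih =>
    intro x a b f hxa hxb hf
    by_cases hba : b = a
    · exact ⟨f, hba ▸ hf⟩
    · obtain ⟨V, haV, hbV⟩ := hd x a b hxa hxb (fun h => hba h.symm)
      have ha1 : r a (f 1) := hf.1 ▸ hf.2.2 0 (by omega)
      obtain ⟨g, hg⟩ := ih a (f 1) V (fun i => f (i + 1)) ha1 haV (shift_seq hf)
      refine ⟨fun i => if i = 0 then b else g (i - 1), rfl, by simp [hg.2.1], ?_⟩
      intro i hi
      match i with
      | 0 => simpa [hg.1] using hbV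
      | (j + 1) =>
        simpa using hg.2.2 j (by omega)

lemma main_lemma {S : Type*} {r : S → S → Prop}
    (hd : ∀ T U₀ U₁, r T U₀ → r T U₁ → U₀ ≠ U₁ → ∃ V, r U₀ V ∧ r U₁ V)
    (e : S) (he : ∀ z, ¬ r e z) :
    ∀ (n : ℕ) (x : S) (f : ℕ → S), IsRedSeq r f n x e →
      ∀ (g : ℕ → S) (m : ℕ) (y : S), IsRedSeq r g m x y → (∀ z, ¬ r y z) →
        m = n ∧ y = e := by
  intro n
  induction n with
  | zero =>
    intro x f hf g m y hg hy
    have hxe : x = e := by rw [← hf.1, hf.2.1]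
    match m with
    | 0 =>
      refine ⟨rfl, ?_⟩
      rw [← hg.2.1, hg.1, hxe]
    | (k + 1) =>
      have := hg.2.2 0 (by omega)
      rw [hg.1, hxe] at this
      exact absurd this (he _)
  | succ n ih =>
    intro x f hf g m y hg hy
    have hx1 : r x (f 1) := hf.1 ▸ hf.2.2 0 (by omega)
    match m with
    | 0 =>
      have hyx : y = x := by rw [← hg.2.1, hg.1]
      exact absurd (hyx ▸ hx1) (hy _)
    | (k + 1) =>
      have hxg1 : r x (g 1) := hg.1 ▸ hg.2.2 0 (by omega)
      obtain ⟨f', hf'⟩ := key_lemma hd e he n x (f 1) (g 1) (fun i => f (i + 1))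
        hx1 hxg1 (shift_seq hf)
      obtain ⟨hk, hye⟩ := ih (g 1) f' hf' (fun i => g (i + 1)) k y (shift_seq hg) hy
      exact ⟨by omega, hye⟩

lemma seq_of_rtg {S : Type*} {r : S → S → Prop} {x y : S}
    (h : Relation.ReflTransGen r x y) : ∃ (g : ℕ → S) (m : ℕ), IsRedSeq r g m x y := by
  induction h with
  | refl => exact ⟨fun _ => x, 0, rfl, rfl, fun i hi => by omega⟩
  | @tail b c hb hc ih =>
    obtain ⟨g, m, hg⟩ := ih
    refine ⟨fun i => if i ≤ m then g i else c, m + 1, by simp [hg.1], by simp, ?_⟩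
    intro i hi
    rcases lt_or_eq_of_le (Nat.lt_succ_iff.mp hi) with h1 | h1
    · simpa [Nat.le_of_lt h1, Nat.succ_le_of_lt h1] using hg.2.2 i h1
    · subst h1
      simpa [hg.2.1] using hc

/-- If the diamond property holds and `x` reduces to the normal form `e` in `n`
steps, then every maximal reduction sequence from `x` has length `n` and ends at
`e`; consequently `x` has no other normal form. -/
theorem diamond_all_maximal_seqs {S : Type*} (r : S → S → Prop)
    (hd : ∀ T U₀ U₁, r T U₀ → r T U₁ → U₀ ≠ U₁ → ∃ V, r U₀ V ∧ r U₁ V)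
    (x e : S) (he : ∀ z, ¬ r e z)
    (f : ℕ → S) (n : ℕ) (hf : IsRedSeq r f n x e) :
    (∀ (g : ℕ → S) (m : ℕ) (y : S), IsRedSeq r g m x y → (∀ z, ¬ r y z) →
        m = n ∧ y = e) ∧
    (∀ y : S, Relation.ReflTransGen r x y → (∀ z, ¬ r y z) → y = e) := by
  refine ⟨fun g m y hg hy => main_lemma hd e he n x f hf g m y hg hy, ?_⟩
  intro y hxy hy
  obtain ⟨g, m, hg⟩ := seq_of_rtg hxy
  exact (main_lemma hd e he n x f hf g m y hg hy).2
end
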